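/- Let V be a finite-dimensional real inner product space, φ an alternating p-form of comass one on V, and Ω ⊆ V a bounded open set. Let W be an open set containing the closure of Ω and ρ : W → ℝ a C^∞ defining function for Ω: Ω = {x ∈ W : ρ(x) < 0}, the topological boundary ∂Ω equals {x ∈ W : ρ(x) = 0}, and Dρ(x) ≠ 0 for every x ∈ ∂Ω. Assume ∂Ω is strictly φ-convex: for every x ∈ ∂Ω and every φ-plane (e₁,…,e_p) ∈ G(φ) with Dρ(x)(e_j) = 0 for all j, Σ_{j=1}^p D²ρ(x)(e_j,e_j) > 0. Then there is a compact set L ⊆ Ω such that the function x ↦ −log(−ρ(x)) is strictly φ-plurisubharmonic on Ω∖L, i.e. for every x ∈ Ω∖L and every φ-plane (e₁,…,e_p) ∈ G(φ), Σ_{j=1}^p D²(−log(−ρ))(x)(e_j,e_j) > 0. (Theorem 5.6, Euclidean case) -/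

import Mathlib

open scoped RealInnerProductSpace

noncomputable section

variable {V : Type*} [NormedAddCommGroup V] [InnerProductSpace ℝ V] [FiniteDimensional ℝ V]

/-!
Write `s = -ρ > 0` on `Ω`. For a `φ`-plane `e`, the trace of the Hessian of `-log(-ρ)` on `e` is
`s⁻¹ A + s⁻² B`, where `A = ∑ⱼ D²ρ(eⱼ, eⱼ)` and `B = ∑ⱼ (Dρ eⱼ)²`. Strict `φ`-convexity says
`A > 0` wherever `B = 0` on `∂Ω × G(φ)`; since `∂Ω × G(φ)` is compact, there is one `M` with
`A + M B > 0` there, and by continuity on a neighbourhood `u × G(φ)` of it. At the points of `u`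
where `M s < 1` we get `s A + B = s (A + M B) + (1 - M s) B > 0`, and the remaining points of
`closure Ω` form a compact subset of `Ω`.
-/

theorem MultilinearMap.continuous_of_finiteDimensional {ι 𝕜 E F : Type*} [Fintype ι]
    [NontriviallyNormedField 𝕜] [CompleteSpace 𝕜] [NormedAddCommGroup E] [NormedSpace 𝕜 E]
    [FiniteDimensional 𝕜 E] [NormedAddCommGroup F] [NormedSpace 𝕜 F]
    (f : MultilinearMap 𝕜 (fun _ : ι => E) F) : Continuous f := by
  classical
  let b := Module.finBasis 𝕜 E
  have hf : ⇑f = fun e => ∑ r : ι → Fin _, (∏ j, b.equivFunL (e j) (r j)) • f fun j => b (r j) := by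
    funext e
    conv_lhs => rw [← funext fun j => b.sum_equivFun (e j)]
    simp_rw [f.map_sum, f.map_smul_univ]
    rfl
  rw [hf]
  fun_prop

theorem isCompact_setOf_orthonormal {ι : Type*} [Fintype ι] :
    IsCompact {e : ι → V | Orthonormal ℝ e} := by
  classical
  refine Metric.isCompact_of_isClosed_isBounded ?_ ?_
  · have : {e : ι → V | Orthonormal ℝ e} =
        ⋂ (i) (j), {e | ⟪e i, e j⟫ = if i = j then 1 else 0} := by
      ext e; simp [orthonormal_iff_ite]
    rw [this]
    exact isClosed_iInter fun i => isClosed_iInter fun j => isClosed_eq (by fun_prop) (by fun_prop)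
  · refine (Metric.isBounded_closedBall (x := (0 : ι → V)) (r := 1)).subset fun e he => ?_
    rw [Metric.mem_closedBall, dist_zero_right]
    exact (pi_norm_le_iff_of_nonneg zero_le_one).2 fun j => (he.1 j).le

/-- The set `G(φ)` of `φ`-planes. -/
def phiPlanes {ι : Type*} (φ : V [⋀^ι]→ₗ[ℝ] ℝ) : Set (ι → V) :=
  {e | Orthonormal ℝ e ∧ φ e = 1}

theorem isCompact_phiPlanes {ι : Type*} [Fintype ι] (φ : V [⋀^ι]→ₗ[ℝ] ℝ) :
    IsCompact (phiPlanes φ) :=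
  isCompact_setOf_orthonormal.inter_right <|
    isClosed_eq φ.toMultilinearMap.continuous_of_finiteDimensional continuous_const

theorem IsCompact.exists_isOpen_forall_pos_add_mul {Z : Type*} [TopologicalSpace Z]
    {S U : Set Z} {A B : Z → ℝ} (hS : IsCompact S) (hU : IsOpen U) (hSU : S ⊆ U)
    (hA : ContinuousOn A U) (hB : ContinuousOn B U) (hB0 : ∀ z ∈ S, 0 ≤ B z)
    (hAB : ∀ z ∈ S, B z = 0 → 0 < A z) :
    ∃ M : ℝ, ∃ O, IsOpen O ∧ S ⊆ O ∧ ∀ z ∈ O, 0 < A z + M * B z := by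
  let O : ℕ → Set Z := fun n => U ∩ (fun z => A z + n * B z) ⁻¹' Set.Ioi 0
  have hO : ∀ n, IsOpen (O n) := fun n =>
    (hA.add (continuousOn_const.mul hB)).isOpen_inter_preimage hU isOpen_Ioi
  have hcover : S ⊆ ⋃ n, O n := by
    intro z hz
    obtain ⟨n, hn⟩ : ∃ n : ℕ, 0 < A z + n * B z := by
      rcases (hB0 z hz).eq_or_lt with h | h
      · exact ⟨0, by simpa using hAB z hz h.symm⟩
      · obtain ⟨n, hn⟩ := exists_nat_gt (-A z / B z)
        exact ⟨n, by rw [div_lt_iff₀ h] at hn; linarith⟩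
    exact Set.mem_iUnion.2 ⟨n, hSU hz, hn⟩
  obtain ⟨t, ht⟩ := hS.elim_finite_subcover O hO hcover
  refine ⟨(t.sup id : ℕ), O (t.sup id), hO _, fun z hz => ?_, fun z hz => hz.2⟩
  obtain ⟨n, hn, hzn⟩ := Set.mem_iUnion₂.1 (ht hz)
  have hnN : (n : ℝ) ≤ t.sup id := Nat.cast_le.2 (Finset.le_sup (f := id) hn)
  have hpos : 0 < A z + n * B z := hzn.2
  exact ⟨hzn.1, show 0 < A z + (t.sup id : ℕ) * B z by
    linarith [mul_le_mul_of_nonneg_right hnN (hB0 z hz)]⟩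

theorem closure_diff_subset_of_frontier_subset {X : Type*} [TopologicalSpace X] {s t : Set X}
    (hs : IsOpen s) (ht : frontier s ⊆ t) : closure s \ t ⊆ s := by
  rintro x ⟨hxs, hxt⟩
  by_contra hx
  exact hxt (ht ⟨hxs, by rwa [hs.interior_eq]⟩)

section Hessian

variable {E ι : Type*} [NormedAddCommGroup E] [NormedSpace ℝ E] [Fintype ι]

theorem HasFDerivAt.neg_log_neg {f : E → ℝ} {f' : E →L[ℝ] ℝ} {x : E} (hf : HasFDerivAt f f' x)
    (hx : f x < 0) : HasFDerivAt (fun y => -Real.log (-f y)) ((-f x)⁻¹ • f') x :=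
  (hf.neg.log (neg_pos.2 hx).ne').neg.congr_fderiv (by simp [← neg_smul])

theorem iteratedFDeriv_two_neg_log_neg_apply {f : E → ℝ} {x : E} (hf : ContDiffAt ℝ 2 f x)
    (hx : f x < 0) (v : E) :
    iteratedFDeriv ℝ 2 (fun y => -Real.log (-f y)) x ![v, v] =
      (-f x)⁻¹ * iteratedFDeriv ℝ 2 f x ![v, v] + ((-f x) ^ 2)⁻¹ * fderiv ℝ f x v ^ 2 := by
  have hfderiv : fderiv ℝ (fun y => -Real.log (-f y)) =ᶠ[nhds x]
      fun y => (-f y)⁻¹ • fderiv ℝ f y := by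
    filter_upwards [hf.eventually (by simp), hf.continuousAt.eventually_lt continuousAt_const hx]
      with y hy hyneg
    exact ((hy.differentiableAt (by simp)).hasFDerivAt.neg_log_neg hyneg).fderiv
  have hinv : HasFDerivAt (fun y => (-f y)⁻¹) (((-f x) ^ 2)⁻¹ • fderiv ℝ f x) x :=
    ((hasDerivAt_inv (neg_pos.2 hx).ne').comp_hasFDerivAt x
      (hf.differentiableAt (by simp)).hasFDerivAt.neg).congr_fderiv (by simp)
  have hsecond : HasFDerivAt (fun y => (-f y)⁻¹ • fderiv ℝ f y) _ x :=
    hinv.smul ((hf.fderiv_right (m := 1) le_rfl).differentiableAt one_ne_zero).hasFDerivAt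
  rw [iteratedFDeriv_two_apply, iteratedFDeriv_two_apply, hfderiv.fderiv_eq, hsecond.fderiv]
  simp [sq, mul_assoc]

def hessianTrace (f : E → ℝ) (x : E) (e : ι → E) : ℝ :=
  ∑ j, iteratedFDeriv ℝ 2 f x ![e j, e j]

def sumSqFDeriv (f : E → ℝ) (x : E) (e : ι → E) : ℝ :=
  ∑ j, fderiv ℝ f x (e j) ^ 2

theorem sumSqFDeriv_nonneg (f : E → ℝ) (x : E) (e : ι → E) : 0 ≤ sumSqFDeriv f x e :=
  Finset.sum_nonneg fun _ _ => sq_nonneg _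

theorem sumSqFDeriv_eq_zero_iff {f : E → ℝ} {x : E} {e : ι → E} :
    sumSqFDeriv f x e = 0 ↔ ∀ j, fderiv ℝ f x (e j) = 0 := by
  simp [sumSqFDeriv, Finset.sum_eq_zero_iff_of_nonneg fun _ _ => sq_nonneg _]

theorem hessianTrace_neg_log_neg {f : E → ℝ} {x : E} (hf : ContDiffAt ℝ 2 f x) (hx : f x < 0)
    (e : ι → E) :
    hessianTrace (fun y => -Real.log (-f y)) x e =
      (-f x)⁻¹ * hessianTrace f x e + ((-f x) ^ 2)⁻¹ * sumSqFDeriv f x e := by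
  simp only [hessianTrace, sumSqFDeriv, iteratedFDeriv_two_neg_log_neg_apply hf hx,
    Finset.mul_sum, Finset.sum_add_distrib]

theorem hessianTrace_neg_log_neg_pos {f : E → ℝ} {x : E} {e : ι → E} {M : ℝ}
    (hf : ContDiffAt ℝ 2 f x) (hx : f x < 0)
    (hM : 0 < hessianTrace f x e + M * sumSqFDeriv f x e) (hMx : M * -f x < 1) :
    0 < hessianTrace (fun y => -Real.log (-f y)) x e := by
  have hs : 0 < -f x := neg_pos.2 hx
  have hB := sumSqFDeriv_nonneg f x e
  have key : 0 < -f x * hessianTrace f x e + sumSqFDeriv f x e := by nlinarith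
  calc 0 < (-f x * hessianTrace f x e + sumSqFDeriv f x e) / (-f x) ^ 2 := by positivity
    _ = _ := by rw [hessianTrace_neg_log_neg hf hx]; field_simp

theorem continuousOn_hessianTrace {f : E → ℝ} {U : Set E} (hf : ContDiffOn ℝ 2 f U)
    (hU : IsOpen U) :
    ContinuousOn (fun q : E × (ι → E) => hessianTrace f q.1 q.2) (U ×ˢ Set.univ) := by
  have hD2 : ContinuousOn (iteratedFDeriv ℝ 2 f) U :=
    (hf.continuousOn_iteratedFDerivWithin le_rfl hU.uniqueDiffOn).congr
      fun x hx => (iteratedFDerivWithin_of_isOpen 2 hU hx).symm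
  refine continuousOn_finsetSum _ fun j _ => ?_
  have hej : Continuous fun q : E × (ι → E) => q.2 j := (continuous_apply j).comp continuous_snd
  exact continuous_eval.comp_continuousOn ((hD2.comp continuousOn_fst fun q hq => hq.1).prodMk
    (hej.matrixVecCons (hej.matrixVecCons continuous_const)).continuousOn)

theorem continuousOn_sumSqFDeriv {f : E → ℝ} {U : Set E} (hf : ContDiffOn ℝ 1 f U)
    (hU : IsOpen U) :
    ContinuousOn (fun q : E × (ι → E) => sumSqFDeriv f q.1 q.2) (U ×ˢ Set.univ) := by
  have hD : ContinuousOn (fderiv ℝ f) U := hf.continuousOn_fderiv_of_isOpen hU le_rfl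
  refine continuousOn_finsetSum _ fun j _ => ?_
  exact ((hD.comp continuousOn_fst fun q hq => hq.1).clm_apply (by fun_prop)).pow 2

theorem exists_isOpen_pos_hessianTrace_add_mul {f : E → ℝ} {K U : Set E} {G : Set (ι → E)}
    (hK : IsCompact K) (hG : IsCompact G) (hU : IsOpen U) (hKU : K ⊆ U) (hf : ContDiffOn ℝ 2 f U)
    (hconv : ∀ x ∈ K, ∀ e ∈ G, (∀ j, fderiv ℝ f x (e j) = 0) → 0 < hessianTrace f x e) :
    ∃ M : ℝ, ∃ u, IsOpen u ∧ K ⊆ u ∧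
      ∀ x ∈ u, ∀ e ∈ G, 0 < hessianTrace f x e + M * sumSqFDeriv f x e := by
  obtain ⟨M, O, hO, hKGO, hpos⟩ := (hK.prod hG).exists_isOpen_forall_pos_add_mul
    (hU.prod isOpen_univ) (Set.prod_mono hKU (Set.subset_univ G))
    (continuousOn_hessianTrace hf hU) (continuousOn_sumSqFDeriv (hf.of_le one_le_two) hU)
    (fun q _ => sumSqFDeriv_nonneg f q.1 q.2)
    (fun q hq h => hconv q.1 hq.1 q.2 hq.2 (sumSqFDeriv_eq_zero_iff.1 h))
  obtain ⟨u, v, hu, -, hKu, hGv, huv⟩ := generalized_tube_lemma hK hG hO hKGO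
  exact ⟨M, u, hu, hKu, fun x hx e he => hpos (x, e) (huv ⟨hx, hGv he⟩)⟩

end Hessian

theorem neg_log_strictly_psh_near_boundary {p : ℕ}
    (φ : V [⋀^Fin p]→ₗ[ℝ] ℝ)
    (Ω W : Set V) (hΩo : IsOpen Ω) (hΩb : Bornology.IsBounded Ω) (hWo : IsOpen W)
    (hWcl : closure Ω ⊆ W)
    (ρ : V → ℝ) (hρ : ContDiffOn ℝ (⊤ : ℕ∞) ρ W)
    (hΩdef : Ω = {x ∈ W | ρ x < 0})
    (hbdry : frontier Ω = {x ∈ W | ρ x = 0})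
    (hconv : ∀ x ∈ frontier Ω, ∀ e : Fin p → V, Orthonormal ℝ e → φ e = 1 →
      (∀ j, fderiv ℝ ρ x (e j) = 0) →
      0 < ∑ j, iteratedFDeriv ℝ 2 ρ x ![e j, e j]) :
    ∃ L : Set V, IsCompact L ∧ L ⊆ Ω ∧
      ∀ x ∈ Ω \ L, ∀ e : Fin p → V, Orthonormal ℝ e → φ e = 1 →
        0 < ∑ j, iteratedFDeriv ℝ 2 (fun y => -Real.log (-ρ y)) x ![e j, e j] := by
  have hΩW : Ω ⊆ W := subset_closure.trans hWcl
  have hρΩ : ∀ x ∈ Ω, ρ x < 0 := by rw [hΩdef]; exact fun x hx => hx.2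
  have hρ2 : ContDiffOn ℝ 2 ρ W := hρ.of_le (by norm_cast)
  have hK : IsCompact (frontier Ω) :=
    hΩb.isCompact_closure.of_isClosed_subset isClosed_frontier frontier_subset_closure
  obtain ⟨M, u, hu, hKu, hpos⟩ := exists_isOpen_pos_hessianTrace_add_mul hK
    (isCompact_phiPlanes φ) hWo (hbdry ▸ Set.sep_subset W _) hρ2
    fun x hx e he => hconv x hx e he.1 he.2
  set N := u ∩ (W ∩ (fun x => M * -ρ x) ⁻¹' Set.Iio 1)
  have hN : IsOpen N :=
    hu.inter ((continuousOn_const.mul hρ.continuousOn.neg).isOpen_inter_preimage hWo isOpen_Iio)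
  have hKN : frontier Ω ⊆ N := fun x hx => by
    obtain ⟨hxW, hρx⟩ : x ∈ {x ∈ W | ρ x = 0} := hbdry ▸ hx
    exact ⟨hKu hx, hxW, show M * -ρ x < 1 by simp [hρx]⟩
  refine ⟨closure Ω \ N, hΩb.isCompact_closure.diff hN,
    closure_diff_subset_of_frontier_subset hΩo hKN, ?_⟩
  rintro x ⟨hxΩ, hxN⟩ e he hφe
  have hx : x ∈ N := by_contra fun h => hxN ⟨subset_closure hxΩ, h⟩
  exact hessianTrace_neg_log_neg_pos (hρ2.contDiffAt (hWo.mem_nhds (hΩW hxΩ))) (hρΩ x hxΩ)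
    (hpos x hx.1 e ⟨he, hφe⟩) hx.2.2
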